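/- Let k be a field of characteristic 0 with absolute Galois group Γ, X a k-variety with structure map p: X → Spec k, and X̄ = X ×_k k̄. Let 0 → M → S → ℤ → 0 be an extension of discrete Γ-modules with class u ∈ H¹(k, M). Suppose β ∈ Hom_Γ(M, Pic X̄) satisfies: u ∪ β ∈ H¹(k, Pic X̄) lies in the image of the map r: Br₁X → H¹(k, Pic X̄) from the Hochschild–Serre spectral sequence. Then u ∪ ∂(β) = 0 in H³(k, k̄[X]^×), where ∂: Hom_Γ(M, Pic X̄) → Ext²_Γ(M, k̄[X]^×) is the differential d₂^{0,1} of the spectral sequence Ext^p_Γ(M, H^q(X̄, 𝔾_m)) ⇒ Ext^{p+q}_X(p^*M, 𝔾_m), and consequently there exists γ ∈ Ext²_Γ(S, k̄[X]^×) with i^*(γ) = ∂(β). -/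
import Mathlib


/-!
STATEMENT 11 (from the proof of Corollary 2.2(ii)).  Since étale cohomology, Brauer groups
and Galois cohomology of varieties are not available, the relevant groups and canonical maps
are abstracted, together with the facts used about them:
* `Br1X = Br₁X`, `H1Pic = H¹(k, Pic X̄)`, `H3 = H³(k, k̄[X]^×)`,
  `HomMPic = Hom_Γ(M, Pic X̄)`, `Ext2M = Ext²_Γ(M, k̄[X]^×)`, `Ext2S = Ext²_Γ(S, k̄[X]^×)`;
* `r : Br₁X → H¹(k, Pic X̄)` and `d = d₂^{1,1} : H¹(k, Pic X̄) → H³(k, k̄[X]^×)` are consecutive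
  maps of the low-degree exact sequence of the Hochschild–Serre spectral sequence
  (`Function.Exact r d`);
* `del = d₂^{0,1} : Hom_Γ(M, Pic X̄) → Ext²_Γ(M, k̄[X]^×)` is the differential of the spectral
  sequence `Ext^p_Γ(M, H^q(X̄,𝔾_m)) ⇒ Ext^{p+q}_X(p^*M,𝔾_m)`;
* `cupHom = u∪− : Hom_Γ(M, Pic X̄) → H¹(k, Pic X̄)` and
  `cupExt = u∪− : Ext²_Γ(M, k̄[X]^×) → H³(k, k̄[X]^×)` are cup products with the class
  `u ∈ H¹(k, M)` of the extension `0 → M → S → ℤ → 0`, satisfying the compatibility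
  `u ∪ del(β) = d(u ∪ β)`;
* `i^* : Ext²_Γ(S, k̄[X]^×) → Ext²_Γ(M, k̄[X]^×)` fits into the exact column
  `Ext²_Γ(S, −) → Ext²_Γ(M, −) → H³(k, k̄[X]^×)` (`Function.Exact istar cupExt`).
Conclusion: if `u ∪ β ∈ im r` then `u ∪ del(β) = 0` and `del(β) = i^*(γ)` for some `γ`.
-/

theorem statement11
    (Br1X H1Pic H3 HomMPic Ext2M Ext2S : Type*)
    [AddCommGroup Br1X] [AddCommGroup H1Pic] [AddCommGroup H3]
    [AddCommGroup HomMPic] [AddCommGroup Ext2M] [AddCommGroup Ext2S]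
    (r : Br1X →+ H1Pic) (d : H1Pic →+ H3)
    (del : HomMPic →+ Ext2M) (istar : Ext2S →+ Ext2M)
    (cupHom : HomMPic →+ H1Pic) (cupExt : Ext2M →+ H3)
    -- exactness of the bottom row of diagram (5) at `H¹(k, Pic X̄)`
    (hexact_rd : Function.Exact r d)
    -- exactness of the column `Ext²(S, k̄[X]^×) → Ext²(M, k̄[X]^×) → H³(k, k̄[X]^×)`
    (hexact_col : Function.Exact istar cupExt)
    -- the compatibility `u ∪ del(β) = d(u ∪ β)`
    (hcompat : ∀ x : HomMPic, cupExt (del x) = d (cupHom x))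
    -- the given element: `β` with `u ∪ β ∈ im r`
    (β : HomMPic) (hβ : cupHom β ∈ Set.range r) :
    cupExt (del β) = 0 ∧ ∃ γ : Ext2S, istar γ = del β := by
  have h0 : cupExt (del β) = 0 := by
    rw [hcompat]
    obtain ⟨b, hb⟩ := hβ
    rw [← hb]
    exact (hexact_rd (r b)).mpr ⟨b, rfl⟩
  exact ⟨h0, (hexact_col (del β)).mp h0⟩
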